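/- Let A, B, and F be Young functions with A and F finite-valued, and let E : [0,∞) → [0,∞) be non-decreasing. If B(tE(F^{−1}(A(t)))) ≤ A(t) for all t ≥ 0, then B(E(s)·t) ≤ F(s) + A(t) for all s, t ≥ 0. -/

import Mathlib

open MeasureTheory Filter Set Topology ENNReal NNReal RealInnerProductSpace

noncomputable section

/-- Euclidean space `ℝⁿ`. -/
abbrev En (n : ℕ) : Type := EuclideanSpace ℝ (Fin n)

/-- A Young function: a convex, left-continuous function `A : [0,∞) → [0,∞]` with `A 0 = 0`,
not identically `0` and not identically `∞` on `(0,∞)`. -/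
structure YoungFunction : Type where
  toFun : ℝ≥0 → ℝ≥0∞
  map_zero' : toFun 0 = 0
  convex' : ∀ s t a b : ℝ≥0, a + b = 1 →
    toFun (a * s + b * t) ≤ (a : ℝ≥0∞) * toFun s + (b : ℝ≥0∞) * toFun t
  leftContinuous' : ∀ t : ℝ≥0, Filter.Tendsto toFun (nhdsWithin t (Set.Iio t)) (nhds (toFun t))
  not_zero' : ∃ t : ℝ≥0, 0 < t ∧ toFun t ≠ 0
  not_top' : ∃ t : ℝ≥0, 0 < t ∧ toFun t ≠ ⊤

instance : CoeFun YoungFunction fun _ => ℝ≥0 → ℝ≥0∞ := ⟨YoungFunction.toFun⟩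

/-- A Young function is non-degenerate if `A t > 0` for all `t > 0`. -/
def YoungFunction.NonDegenerate (A : YoungFunction) : Prop :=
  ∀ t : ℝ≥0, 0 < t → A.toFun t ≠ 0

/-- The `Δ₂`-condition near zero. -/
def Delta2NearZero (A : ℝ≥0 → ℝ≥0∞) : Prop :=
  ∃ c : ℝ≥0, 1 ≤ c ∧ ∃ t₂ : ℝ≥0, 0 < t₂ ∧ ∀ t : ℝ≥0, t ≤ t₂ → A (2 * t) ≤ (c : ℝ≥0∞) * A t

/-- Canonical extension of a function on `[0,∞)` to `[0,∞]`, sending `∞` to `∞`. -/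
def extYF (A : ℝ≥0 → ℝ≥0∞) (t : ℝ≥0∞) : ℝ≥0∞ :=
  if t = ⊤ then ⊤ else A t.toNNReal

/-- The generalized right-continuous inverse `A⁻¹(t) = inf {s ≥ 0 : A s > t}`. -/
def rcInv (A : ℝ≥0 → ℝ≥0∞) (t : ℝ≥0∞) : ℝ≥0∞ :=
  sInf {s : ℝ≥0∞ | ∃ r : ℝ≥0, s = (r : ℝ≥0∞) ∧ t < A r}

/-- Canonical upper extension of a monotone function `E : [0,∞) → [0,∞)` to `[0,∞]`. -/
def extE (E : ℝ≥0 → ℝ≥0) (t : ℝ≥0∞) : ℝ≥0∞ :=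
  ⨆ (s : ℝ≥0) (_ : (s : ℝ≥0∞) ≤ t), (E s : ℝ≥0∞)

/-- The modular `∫ A(|u|/λ) dμ` associated with a Young function. -/
def modular {α : Type*} [MeasurableSpace α] (A : ℝ≥0 → ℝ≥0∞) (μ : Measure α)
    (lam : ℝ≥0) (u : α → ℝ) : ℝ≥0∞ :=
  ∫⁻ x, A (‖u x‖₊ / lam) ∂μ

/-- Membership in the Orlicz space `L^A(μ)`. -/
def MemLA {α : Type*} [MeasurableSpace α] (A : ℝ≥0 → ℝ≥0∞) (μ : Measure α) (u : α → ℝ) : Prop :=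
  AEMeasurable u μ ∧ ∃ lam : ℝ≥0, 0 < lam ∧ modular A μ lam u < ⊤

/-- Membership in the Orlicz heart `E^A(μ)`. -/
def MemEA {α : Type*} [MeasurableSpace α] (A : ℝ≥0 → ℝ≥0∞) (μ : Measure α) (u : α → ℝ) : Prop :=
  AEMeasurable u μ ∧ ∀ lam : ℝ≥0, 0 < lam → modular A μ lam u < ⊤

/-- The Luxemburg norm. -/
def luxNorm {α : Type*} [MeasurableSpace α] (A : ℝ≥0 → ℝ≥0∞) (μ : Measure α) (u : α → ℝ) : ℝ≥0∞ :=
  sInf {l : ℝ≥0∞ | ∃ lam : ℝ≥0, 0 < lam ∧ l = (lam : ℝ≥0∞) ∧ modular A μ lam u ≤ 1}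

/-- The `L^∞` norm (essential supremum of the absolute value). -/
def linftyN {α : Type*} [MeasurableSpace α] (μ : Measure α) (u : α → ℝ) : ℝ≥0∞ :=
  essSup (fun x => (‖u x‖₊ : ℝ≥0∞)) μ

/-- `V` is the weak gradient of `u` on the open set `Ω ⊆ ℝⁿ`. -/
def IsWeakGradOn {n : ℕ} (Ω : Set (En n)) (u : En n → ℝ) (V : En n → En n) : Prop :=
  LocallyIntegrableOn u Ω volume ∧ LocallyIntegrableOn (fun x => ‖V x‖) Ω volume ∧
  ∀ φ : En n → ℝ, ContDiff ℝ (⊤ : ℕ∞) φ → HasCompactSupport φ → tsupport φ ⊆ Ω →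
    ∀ y : En n, (∫ x in Ω, u x * (fderiv ℝ φ x y)) = - ∫ x in Ω, (inner ℝ (V x) y : ℝ) * φ x

/-- Membership in the Orlicz–Sobolev space `W^{1,A}(Ω)`, with weak gradient `V`. -/
def MemW1A {n : ℕ} (A : ℝ≥0 → ℝ≥0∞) (Ω : Set (En n)) (u : En n → ℝ) (V : En n → En n) : Prop :=
  IsWeakGradOn Ω u V ∧ MemLA A (volume.restrict Ω) u ∧
    MemLA A (volume.restrict Ω) (fun x => ‖V x‖)

/-- The norm of `W^{1,A}(Ω)`. -/
def normW1A {n : ℕ} (A : ℝ≥0 → ℝ≥0∞) (Ω : Set (En n)) (u : En n → ℝ) (V : En n → En n) : ℝ≥0∞ :=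
  luxNorm A (volume.restrict Ω) u + luxNorm A (volume.restrict Ω) (fun x => ‖V x‖)

/-- Extension of `u` by `0` outside `Ω`. -/
def hatFn {n : ℕ} (Ω : Set (En n)) (u : En n → ℝ) : En n → ℝ := Ω.indicator u

/-- Membership in the homogeneous Orlicz–Sobolev space `V₀^{1,A}(Ω)`, with weak gradient `V`
of the extension by zero. -/
def MemV01 {n : ℕ} (A : ℝ≥0 → ℝ≥0∞) (Ω : Set (En n)) (u : En n → ℝ) (V : En n → En n) : Prop :=
  IsWeakGradOn (Set.univ) (hatFn Ω u) V ∧ MemLA A volume (fun x => ‖V x‖) ∧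
  ∀ t : ℝ, 0 < t → volume {x : En n | t < |hatFn Ω u x|} < ⊤

/-- Modular convergence in `W^{1,A}(Ω)` with constant `lam`. -/
def ModConvW1 {n : ℕ} (A : ℝ≥0 → ℝ≥0∞) (Ω : Set (En n)) (lam : ℝ≥0)
    (u : ℕ → En n → ℝ) (V : ℕ → En n → En n) (u₀ : En n → ℝ) (V₀ : En n → En n) : Prop :=
  Tendsto (fun k => modular A (volume.restrict Ω) lam (fun x => u k x - u₀ x)) atTop (𝓝 0) ∧
  Tendsto (fun k => modular A (volume.restrict Ω) lam (fun x => ‖V k x - V₀ x‖)) atTop (𝓝 0)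

/-- Modular convergence of gradients in `V₀^{1,A}(Ω)` with constant `lam`. -/
def ModConvV0 {n : ℕ} (A : ℝ≥0 → ℝ≥0∞) (lam : ℝ≥0)
    (V : ℕ → En n → En n) (V₀ : En n → En n) : Prop :=
  Tendsto (fun k => modular A volume lam (fun x => ‖V k x - V₀ x‖)) atTop (𝓝 0)

/-- `T_f` maps `W^{1,A}(Ω)` into `W^{1,B}(Ω)` and is continuous in the modular topology. -/
def MapsModCont {n : ℕ} (A B : ℝ≥0 → ℝ≥0∞) (Ω : Set (En n)) (f : ℝ → ℝ) : Prop :=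
  (∀ u V, MemW1A A Ω u V → ∃ W, MemW1A B Ω (fun x => f (u x)) W) ∧
  ∀ (u : ℕ → En n → ℝ) (V : ℕ → En n → En n) (u₀ : En n → ℝ) (V₀ : En n → En n),
    (∀ k, MemW1A A Ω (u k) (V k)) → MemW1A A Ω u₀ V₀ →
    (∃ lam : ℝ≥0, 0 < lam ∧ ModConvW1 A Ω lam u V u₀ V₀) →
    ∃ (W : ℕ → En n → En n) (W₀ : En n → En n),
      (∀ k, MemW1A B Ω (fun x => f (u k x)) (W k)) ∧
      MemW1A B Ω (fun x => f (u₀ x)) W₀ ∧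
      ∃ lam : ℝ≥0, 0 < lam ∧
        ModConvW1 B Ω lam (fun k x => f (u k x)) W (fun x => f (u₀ x)) W₀

/-- `T_f` maps `V₀^{1,A}(Ω)` into `V₀^{1,B}(Ω)` and is continuous in the modular topology. -/
def MapsModContV0 {n : ℕ} (A B : ℝ≥0 → ℝ≥0∞) (Ω : Set (En n)) (f : ℝ → ℝ) : Prop :=
  (∀ u V, MemV01 A Ω u V → ∃ W, MemV01 B Ω (fun x => f (u x)) W) ∧
  ∀ (u : ℕ → En n → ℝ) (V : ℕ → En n → En n) (u₀ : En n → ℝ) (V₀ : En n → En n),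
    (∀ k, MemV01 A Ω (u k) (V k)) → MemV01 A Ω u₀ V₀ →
    (∃ lam : ℝ≥0, 0 < lam ∧ ModConvV0 A lam V V₀) →
    ∃ (W : ℕ → En n → En n) (W₀ : En n → En n),
      (∀ k, MemV01 B Ω (fun x => f (u k x)) (W k)) ∧
      MemV01 B Ω (fun x => f (u₀ x)) W₀ ∧
      ∃ lam : ℝ≥0, 0 < lam ∧ ModConvV0 B lam W W₀

/-- The integrand `(t/A(t))^{1/(σ-1)}` of the Sobolev-conjugate construction. -/
def integrandA (A : ℝ≥0 → ℝ≥0∞) (σ : ℝ) (t : ℝ) : ℝ≥0∞ :=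
  (ENNReal.ofReal t / A t.toNNReal) ^ ((1 : ℝ) / (σ - 1))

/-- Convergence of `∫^∞ (t/A(t))^{1/(σ-1)} dt` near infinity. -/
def ConvAtTop (A : ℝ≥0 → ℝ≥0∞) (σ : ℝ) : Prop :=
  ∃ c : ℝ, 0 < c ∧ ∫⁻ t in Set.Ioi c, integrandA A σ t < ⊤

/-- Divergence of `∫^∞ (t/A(t))^{1/(σ-1)} dt` near infinity. -/
def DivAtTop (A : ℝ≥0 → ℝ≥0∞) (σ : ℝ) : Prop :=
  ∀ c : ℝ, 0 < c → ∫⁻ t in Set.Ioi c, integrandA A σ t = ⊤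

/-- Convergence of `∫_0 (t/A(t))^{1/(σ-1)} dt` near zero. -/
def ConvAtZero (A : ℝ≥0 → ℝ≥0∞) (σ : ℝ) : Prop :=
  ∃ c : ℝ, 0 < c ∧ ∫⁻ t in Set.Ioo 0 c, integrandA A σ t < ⊤

/-- The function `H_σ(s) = (∫_0^s (t/A(t))^{1/(σ-1)} dt)^{1/σ'}`. -/
def Hn (A : ℝ≥0 → ℝ≥0∞) (σ : ℝ) (s : ℝ) : ℝ :=
  ((∫⁻ t in Set.Ioo 0 s, integrandA A σ t) ^ ((σ - 1) / σ)).toReal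

open scoped Classical in
/-- The Sobolev conjugate `A_σ(t) = A(H_σ⁻¹(t))`, with value `∞` when `t` exceeds `sup H_σ`. -/
def SobConj (A : ℝ≥0 → ℝ≥0∞) (σ : ℝ) (t : ℝ≥0) : ℝ≥0∞ :=
  if ({s : ℝ | 0 ≤ s ∧ (t : ℝ) ≤ Hn A σ s}).Nonempty then
    A (Real.toNNReal (sInf {s : ℝ | 0 ≤ s ∧ (t : ℝ) ≤ Hn A σ s}))
  else ⊤

/-- Equivalence of Young functions near infinity. -/
def EquivNearInfty (A B : ℝ≥0 → ℝ≥0∞) : Prop :=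
  ∃ c : ℝ≥0, 0 < c ∧ ∃ t₀ : ℝ≥0, 0 < t₀ ∧ ∀ t : ℝ≥0, t₀ ≤ t →
    B (t / c) ≤ A t ∧ A t ≤ B (c * t)

/-- The divergence of a smooth vector field on `ℝⁿ`. -/
def divergence {n : ℕ} (φ : En n → En n) (x : En n) : ℝ :=
  ∑ i, fderiv ℝ φ x (EuclideanSpace.single i (1 : ℝ)) i

/-- The perimeter of `G` relative to `Ω`, defined by duality with smooth vector fields. -/
def relPerimeter {n : ℕ} (G Ω : Set (En n)) : ℝ≥0∞ :=
  ⨆ (φ : En n → En n) (_ : ContDiff ℝ (⊤ : ℕ∞) φ ∧ HasCompactSupport φ ∧ tsupport φ ⊆ Ω ∧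
      ∀ x, ‖φ x‖ ≤ 1), ENNReal.ofReal (∫ x in G, divergence φ x)

/-- The class `𝒢_{1/σ'}` of open sets of finite measure supporting a relative isoperimetric
inequality with exponent `1/σ' = (σ-1)/σ`. -/
def MemGClass {n : ℕ} (Ω : Set (En n)) (σ : ℝ) : Prop :=
  IsOpen Ω ∧ volume Ω < ⊤ ∧ ∃ c : ℝ≥0, 0 < c ∧
    ∀ G : Set (En n), G ⊆ Ω → MeasurableSet G →
      (c : ℝ≥0∞) * (min (volume G) (volume (Ω \ G))) ^ ((σ - 1) / σ) ≤ relPerimeter G Ω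

/-- The `W^{1,1}` norm of a pair (function, gradient) on `Ω`. -/
def normW11 {n : ℕ} (Ω : Set (En n)) (u : En n → ℝ) (V : En n → En n) : ℝ≥0∞ :=
  (∫⁻ x in Ω, (‖u x‖₊ : ℝ≥0∞)) + ∫⁻ x in Ω, (‖V x‖₊ : ℝ≥0∞)

/-- The `W^{1,∞}` norm of a pair (function, gradient) on `Ω`. -/
def normW1inf {n : ℕ} (Ω : Set (En n)) (u : En n → ℝ) (V : En n → En n) : ℝ≥0∞ :=
  essSup (fun x => (‖u x‖₊ : ℝ≥0∞)) (volume.restrict Ω) +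
    essSup (fun x => (‖V x‖₊ : ℝ≥0∞)) (volume.restrict Ω)

/-- `Ω` is an extension domain: there is a linear extension operator bounded from
`W^{1,1}(Ω)` to `W^{1,1}(ℝⁿ)` and from `W^{1,∞}(Ω)` to `W^{1,∞}(ℝⁿ)`. -/
def IsExtensionDomain {n : ℕ} (Ω : Set (En n)) : Prop :=
  IsOpen Ω ∧ ∃ Ext : (En n → ℝ) →ₗ[ℝ] (En n → ℝ),
    (∀ u : En n → ℝ, Set.EqOn (Ext u) u Ω) ∧
    ∃ C : ℝ≥0∞,
      (∀ u V, IsWeakGradOn Ω u V → normW11 Ω u V < ⊤ →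
        ∃ W, IsWeakGradOn (Set.univ) (Ext u) W ∧
          normW11 (Set.univ) (Ext u) W ≤ C * normW11 Ω u V) ∧
      (∀ u V, IsWeakGradOn Ω u V → normW1inf Ω u V < ⊤ →
        ∃ W, IsWeakGradOn (Set.univ) (Ext u) W ∧
          normW1inf (Set.univ) (Ext u) W ≤ C * normW1inf Ω u V)

/-- The a.e. derivative bound `|f'(t)| ≤ κ E(κ|t|)`. -/
def DerivBound (f : ℝ → ℝ) (κ : ℝ≥0) (E : ℝ≥0 → ℝ≥0) : Prop :=
  ∀ᵐ t : ℝ, ∀ d : ℝ, HasDerivAt f d t →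
    |d| ≤ ((κ * E (κ * Real.toNNReal |t|) : ℝ≥0) : ℝ)

/-- An `n`-dimensional Young function: convex, even, lower semicontinuous,
finite near `0`, vanishing at `0` and tending to `∞` at infinity. -/
structure YoungFunctionN (n : ℕ) : Type where
  toFun : En n → ℝ≥0∞
  map_zero' : toFun 0 = 0
  convex' : ∀ ξ η : En n, ∀ a b : ℝ, 0 ≤ a → 0 ≤ b → a + b = 1 →
    toFun (a • ξ + b • η) ≤ ENNReal.ofReal a * toFun ξ + ENNReal.ofReal b * toFun η
  even' : ∀ ξ : En n, toFun (-ξ) = toFun ξ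
  lsc' : LowerSemicontinuous toFun
  finite_near_zero' : ∃ ε : ℝ, 0 < ε ∧ ∀ ξ : En n, ‖ξ‖ < ε → toFun ξ < ⊤
  tendsto_top' : Tendsto toFun (Bornology.cobounded (En n)) (𝓝 ⊤)

instance {n : ℕ} : CoeFun (YoungFunctionN n) fun _ => En n → ℝ≥0∞ := ⟨YoungFunctionN.toFun⟩

/-- A non-degenerate `n`-dimensional Young function. -/
def YoungFunctionN.NonDegenerate {n : ℕ} (Φ : YoungFunctionN n) : Prop :=
  ∀ ξ : En n, ξ ≠ 0 → Φ.toFun ξ ≠ 0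

/-- The vector-valued modular `∫ Φ(U/λ) dμ`. -/
def modularV {n : ℕ} (Φ : YoungFunctionN n) (μ : Measure (En n)) (lam : ℝ≥0)
    (U : En n → En n) : ℝ≥0∞ :=
  ∫⁻ x, Φ.toFun (((lam : ℝ))⁻¹ • U x) ∂μ

/-- Membership in the anisotropic homogeneous Orlicz–Sobolev space `V₀^{1,Φ}(Ω)`. -/
def MemV01Phi {n : ℕ} (Φ : YoungFunctionN n) (Ω : Set (En n)) (u : En n → ℝ)
    (V : En n → En n) : Prop :=
  IsWeakGradOn (Set.univ) (hatFn Ω u) V ∧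
  (AEMeasurable V volume ∧ ∃ lam : ℝ≥0, 0 < lam ∧ modularV Φ volume lam V < ⊤) ∧
  ∀ t : ℝ, 0 < t → volume {x : En n | t < |hatFn Ω u x|} < ⊤

/-- Modular convergence of gradients in `V₀^{1,Φ}(Ω)` with constant `lam`. -/
def ModConvV0Phi {n : ℕ} (Φ : YoungFunctionN n) (lam : ℝ≥0)
    (V : ℕ → En n → En n) (V₀ : En n → En n) : Prop :=
  Tendsto (fun k => modularV Φ volume lam (fun x => V k x - V₀ x)) atTop (𝓝 0)

/-- `T_f` maps `V₀^{1,Φ}(Ω)` into `V₀^{1,Ψ}(Ω)` and is continuous in the modular topology. -/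
def MapsModContV0Phi {n : ℕ} (Φ Ψ : YoungFunctionN n) (Ω : Set (En n)) (f : ℝ → ℝ) : Prop :=
  (∀ u V, MemV01Phi Φ Ω u V → ∃ W, MemV01Phi Ψ Ω (fun x => f (u x)) W) ∧
  ∀ (u : ℕ → En n → ℝ) (V : ℕ → En n → En n) (u₀ : En n → ℝ) (V₀ : En n → En n),
    (∀ k, MemV01Phi Φ Ω (u k) (V k)) → MemV01Phi Φ Ω u₀ V₀ →
    (∃ lam : ℝ≥0, 0 < lam ∧ ModConvV0Phi Φ lam V V₀) →
    ∃ (W : ℕ → En n → En n) (W₀ : En n → En n),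
      (∀ k, MemV01Phi Ψ Ω (fun x => f (u k x)) (W k)) ∧
      MemV01Phi Ψ Ω (fun x => f (u₀ x)) W₀ ∧
      ∃ lam : ℝ≥0, 0 < lam ∧ ModConvV0Phi Ψ lam W W₀

/-- `Φo` is the radial "average in measure" `Φ_∘` of the `n`-dimensional Young function `Φ`. -/
def IsCircAvg {n : ℕ} (Φ : YoungFunctionN n) (Φo : ℝ≥0 → ℝ≥0∞) : Prop :=
  ∀ t : ℝ≥0∞, volume {ξ : En n | Φo ‖ξ‖₊ ≤ t} = volume {ξ : En n | Φ.toFun ξ ≤ t}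

/-! ### One-dimensional versions -/

/-- `V` is the weak derivative of `u` on the open set `Ω ⊆ ℝ`. -/
def IsWeakDerivOn (Ω : Set ℝ) (u V : ℝ → ℝ) : Prop :=
  LocallyIntegrableOn u Ω volume ∧ LocallyIntegrableOn V Ω volume ∧
  ∀ φ : ℝ → ℝ, ContDiff ℝ (⊤ : ℕ∞) φ → HasCompactSupport φ → tsupport φ ⊆ Ω →
    (∫ x in Ω, u x * deriv φ x) = - ∫ x in Ω, V x * φ x

/-- Membership in `W^{1,A}(Ω)` for `Ω ⊆ ℝ`. -/
def MemW1A1 (A : ℝ≥0 → ℝ≥0∞) (Ω : Set ℝ) (u V : ℝ → ℝ) : Prop :=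
  IsWeakDerivOn Ω u V ∧ MemLA A (volume.restrict Ω) u ∧ MemLA A (volume.restrict Ω) V

/-- Extension by zero, one-dimensional case. -/
def hatFn1 (Ω : Set ℝ) (u : ℝ → ℝ) : ℝ → ℝ := Ω.indicator u

/-- Membership in `V₀^{1,A}(Ω)` for `Ω ⊆ ℝ`. -/
def MemV011 (A : ℝ≥0 → ℝ≥0∞) (Ω : Set ℝ) (u V : ℝ → ℝ) : Prop :=
  IsWeakDerivOn (Set.univ) (hatFn1 Ω u) V ∧ MemLA A volume V ∧
  ∀ t : ℝ, 0 < t → volume {x : ℝ | t < |hatFn1 Ω u x|} < ⊤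

/-- Modular convergence in `W^{1,A}(Ω)`, `Ω ⊆ ℝ`, with constant `lam`. -/
def ModConvW1R (A : ℝ≥0 → ℝ≥0∞) (Ω : Set ℝ) (lam : ℝ≥0)
    (u V : ℕ → ℝ → ℝ) (u₀ V₀ : ℝ → ℝ) : Prop :=
  Tendsto (fun k => modular A (volume.restrict Ω) lam (fun x => u k x - u₀ x)) atTop (𝓝 0) ∧
  Tendsto (fun k => modular A (volume.restrict Ω) lam (fun x => V k x - V₀ x)) atTop (𝓝 0)

/-- Modular convergence of derivatives in `V₀^{1,A}(Ω)`, `Ω ⊆ ℝ`, with constant `lam`. -/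
def ModConvV0R (A : ℝ≥0 → ℝ≥0∞) (lam : ℝ≥0) (V : ℕ → ℝ → ℝ) (V₀ : ℝ → ℝ) : Prop :=
  Tendsto (fun k => modular A volume lam (fun x => V k x - V₀ x)) atTop (𝓝 0)

/-- `T_f` maps `W^{1,A}(Ω)` into `W^{1,B}(Ω)` continuously in the modular topology, `Ω ⊆ ℝ`. -/
def MapsModContR (A B : ℝ≥0 → ℝ≥0∞) (Ω : Set ℝ) (f : ℝ → ℝ) : Prop :=
  (∀ u V, MemW1A1 A Ω u V → ∃ W, MemW1A1 B Ω (fun x => f (u x)) W) ∧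
  ∀ (u V : ℕ → ℝ → ℝ) (u₀ V₀ : ℝ → ℝ),
    (∀ k, MemW1A1 A Ω (u k) (V k)) → MemW1A1 A Ω u₀ V₀ →
    (∃ lam : ℝ≥0, 0 < lam ∧ ModConvW1R A Ω lam u V u₀ V₀) →
    ∃ (W : ℕ → ℝ → ℝ) (W₀ : ℝ → ℝ),
      (∀ k, MemW1A1 B Ω (fun x => f (u k x)) (W k)) ∧
      MemW1A1 B Ω (fun x => f (u₀ x)) W₀ ∧
      ∃ lam : ℝ≥0, 0 < lam ∧
        ModConvW1R B Ω lam (fun k x => f (u k x)) W (fun x => f (u₀ x)) W₀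

/-- `T_f` maps `V₀^{1,A}(Ω)` into `V₀^{1,B}(Ω)` continuously in the modular topology, `Ω ⊆ ℝ`. -/
def MapsModContV0R (A B : ℝ≥0 → ℝ≥0∞) (Ω : Set ℝ) (f : ℝ → ℝ) : Prop :=
  (∀ u V, MemV011 A Ω u V → ∃ W, MemV011 B Ω (fun x => f (u x)) W) ∧
  ∀ (u V : ℕ → ℝ → ℝ) (u₀ V₀ : ℝ → ℝ),
    (∀ k, MemV011 A Ω (u k) (V k)) → MemV011 A Ω u₀ V₀ →
    (∃ lam : ℝ≥0, 0 < lam ∧ ModConvV0R A lam V V₀) →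
    ∃ (W : ℕ → ℝ → ℝ) (W₀ : ℝ → ℝ),
      (∀ k, MemV011 B Ω (fun x => f (u k x)) (W k)) ∧
      MemV011 B Ω (fun x => f (u₀ x)) W₀ ∧
      ∃ lam : ℝ≥0, 0 < lam ∧ ModConvV0R B lam W W₀


lemma YF_mono (A : YoungFunction) : Monotone A.toFun := by
  intro s t hst
  rcases eq_or_lt_of_le (zero_le : 0 ≤ t) with h0 | h0
  · obtain rfl : t = 0 := h0.symm
    obtain rfl : s = 0 := le_antisymm hst zero_le
    exact le_rfl
  · have ha : s / t ≤ 1 := by rw [div_le_one h0]; exact hst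
    have hc := A.convex' t 0 (s / t) (1 - s / t) (add_tsub_cancel_of_le ha)
    rw [mul_zero, add_zero, div_mul_cancel₀ _ h0.ne', A.map_zero', mul_zero, add_zero] at hc
    calc A.toFun s ≤ (s / t : ℝ≥0) * A.toFun t := hc
      _ ≤ 1 * A.toFun t := by gcongr; exact_mod_cast ha
      _ = A.toFun t := one_mul _

lemma YF_core (A B F : YoungFunction) (hAfin : ∀ t : ℝ≥0, A.toFun t ≠ ⊤)
    (E : ℝ≥0 → ℝ≥0)
    (h : ∀ t : ℝ≥0, extYF (⇑B) ((t : ℝ≥0∞) * extE E (rcInv (⇑F) (A.toFun t))) ≤ A.toFun t)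
    (s t r : ℝ≥0) (htr : t ≤ r) (hsr : F.toFun s ≤ A.toFun r) :
    B.toFun (E s * t) ≤ A.toFun r := by
  have hs : (s : ℝ≥0∞) ≤ rcInv (⇑F) (A.toFun r) := by
    apply le_sInf
    rintro x ⟨q, rfl, hq⟩
    by_contra hlt
    push_neg at hlt
    have hqs : q ≤ s := by exact_mod_cast hlt.le
    exact absurd hq (not_lt.2 ((YF_mono F hqs).trans hsr))
  have hEs : (E s : ℝ≥0∞) ≤ extE E (rcInv (⇑F) (A.toFun r)) := by
    exact le_iSup₂_of_le s hs le_rfl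
  set X := (r : ℝ≥0∞) * extE E (rcInv (⇑F) (A.toFun r)) with hX
  have hXtop : X ≠ ⊤ := by
    intro hXt
    have h2 := h r
    rw [← hX, hXt] at h2
    have hext : extYF (⇑B) (⊤ : ℝ≥0∞) = ⊤ := by simp [extYF]
    rw [hext, top_le_iff] at h2
    exact hAfin r h2
  have hle : ((E s * t : ℝ≥0) : ℝ≥0∞) ≤ X := by
    rw [hX]
    push_cast
    calc ((E s : ℝ≥0∞) * t) ≤ extE E (rcInv (⇑F) (A.toFun r)) * r :=
          mul_le_mul' hEs (by exact_mod_cast htr)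
      _ = _ := mul_comm _ _
  have h2 := h r
  rw [← hX, extYF, if_neg hXtop] at h2
  refine le_trans ?_ h2
  apply YF_mono B
  rw [← ENNReal.coe_le_coe, ENNReal.coe_toNNReal hXtop]
  exact hle

/-- If `B(t E(F^{-1}(A(t)))) ≤ A(t)` for all `t ≥ 0`, then
`B(E(s) t) ≤ F(s) + A(t)` for all `s, t ≥ 0`. -/
theorem young_inequality_with_F
    (A B F : YoungFunction)
    (hAfin : ∀ t : ℝ≥0, A.toFun t ≠ ⊤) (hFfin : ∀ t : ℝ≥0, F.toFun t ≠ ⊤)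
    (E : ℝ≥0 → ℝ≥0) (hE : Monotone E)
    (h : ∀ t : ℝ≥0, extYF (⇑B) ((t : ℝ≥0∞) * extE E (rcInv (⇑F) (A.toFun t))) ≤ A.toFun t) :
    ∀ s t : ℝ≥0, B.toFun (E s * t) ≤ F.toFun s + A.toFun t := by
  intro s t
  by_cases hcase : F.toFun s ≤ A.toFun t
  · exact (YF_core A B F hAfin E h s t t le_rfl hcase).trans le_add_self
  · push_neg at hcase
    obtain ⟨t₀, ht₀pos, ht₀⟩ := A.not_zero'
    have hT : ∃ r : ℝ≥0, F.toFun s ≤ A.toFun r := by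
      obtain ⟨n, hn⟩ := ENNReal.exists_nat_gt (ENNReal.div_lt_top (hFfin s) ht₀).ne
      have hn1 : 1 ≤ n := by
        by_contra hn1
        interval_cases n
        simp at hn
      have hninv : (1 / n : ℝ≥0) ≤ 1 := by
        apply div_le_one_of_le₀ <;> simpa using hn1
      have hc := A.convex' ((n : ℝ≥0) * t₀) 0 (1 / n) (1 - 1 / n)
        (add_tsub_cancel_of_le hninv)
      have hnne : (n : ℝ≥0) ≠ 0 := by positivity
      rw [mul_zero, add_zero, one_div, inv_mul_cancel_left₀ hnne, A.map_zero', mul_zero,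
        add_zero] at hc
      refine ⟨(n : ℝ≥0) * t₀, ?_⟩
      have h1 : F.toFun s ≤ (n : ℝ≥0∞) * A.toFun t₀ :=
        ((ENNReal.div_lt_iff (Or.inl ht₀) (Or.inl (hAfin t₀))).mp hn).le
      refine h1.trans ?_
      calc (n : ℝ≥0∞) * A.toFun t₀ ≤ (n : ℝ≥0∞) * (((n : ℝ≥0)⁻¹ : ℝ≥0) * A.toFun ((n : ℝ≥0) * t₀)) := by
            gcongr
        _ = A.toFun ((n : ℝ≥0) * t₀) := by
            rw [← mul_assoc, ← ENNReal.coe_natCast, ← ENNReal.coe_mul,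
              mul_inv_cancel₀ hnne, ENNReal.coe_one, one_mul]
    set T := {r : ℝ≥0 | F.toFun s ≤ A.toFun r} with hTdef
    have hTne : T.Nonempty := hT
    set τ := sInf T with hτ
    have htau_lb : t ≤ τ := by
      apply le_csInf hTne
      intro r hr
      by_contra hlt
      push_neg at hlt
      exact absurd hr (not_le.2 ((YF_mono A hlt.le).trans_lt hcase))
    have htau_le : A.toFun τ ≤ F.toFun s := by
      rcases eq_or_lt_of_le (zero_le : 0 ≤ τ) with h0 | h0
      · rw [← h0, A.map_zero']; exact zero_le
      · haveI : (nhdsWithin τ (Set.Iio τ)).NeBot := nhdsWithin_Iio_self_neBot' ⟨0, h0⟩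
        refine le_of_tendsto (A.leftContinuous' τ) ?_
        filter_upwards [self_mem_nhdsWithin] with r hr
        by_contra hcon
        push_neg at hcon
        exact absurd (csInf_le (OrderBot.bddBelow T) hcon.le) (not_le.2 hr)
    refine ENNReal.le_of_forall_pos_le_add fun ε hε _ => ?_
    set C := (A.toFun (τ + 1)).toNNReal with hC
    set lam := min 1 (ε / (C + 1)) with hlam
    have hlam1 : lam ≤ 1 := min_le_left _ _
    have hlampos : 0 < lam := by
      apply lt_min one_pos
      positivity
    have hcomb : lam * (τ + 1) + (1 - lam) * τ = τ + lam := by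
      rw [tsub_mul, one_mul, mul_add, mul_one]
      have hmle : lam * τ ≤ τ := mul_le_of_le_one_left zero_le hlam1
      rw [add_assoc, add_comm lam (τ - lam * τ), ← add_assoc,
        add_tsub_cancel_of_le hmle, add_comm]
    have hc := A.convex' (τ + 1) τ lam (1 - lam) (add_tsub_cancel_of_le hlam1)
    rw [hcomb] at hc
    have hFle : F.toFun s ≤ A.toFun (τ + lam) := by
      obtain ⟨r'', hr''T, hr''⟩ := exists_lt_of_csInf_lt hTne
        (lt_add_of_pos_right τ hlampos)
      exact hr''T.trans (YF_mono A hr''.le)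
    have hmain := YF_core A B F hAfin E h s t (τ + lam)
      (htau_lb.trans le_self_add) hFle
    refine hmain.trans (hc.trans ?_)
    have h1 : ((1 - lam : ℝ≥0) : ℝ≥0∞) * A.toFun τ ≤ F.toFun s := by
      calc ((1 - lam : ℝ≥0) : ℝ≥0∞) * A.toFun τ ≤ 1 * A.toFun τ := by
            gcongr; exact_mod_cast tsub_le_self
        _ = A.toFun τ := one_mul _
        _ ≤ F.toFun s := htau_le
    have h2 : (lam : ℝ≥0∞) * A.toFun (τ + 1) ≤ (ε : ℝ≥0∞) := by
      rw [← ENNReal.coe_toNNReal (hAfin (τ + 1)), ← hC, ← ENNReal.coe_mul,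
        ENNReal.coe_le_coe]
      calc lam * C ≤ (ε / (C + 1)) * C := by gcongr; exact min_le_right _ _
        _ ≤ (ε / (C + 1)) * (C + 1) := by gcongr; exact le_self_add
        _ = ε := div_mul_cancel₀ _ (by positivity)
    calc (lam : ℝ≥0∞) * A.toFun (τ + 1) + ((1 - lam : ℝ≥0) : ℝ≥0∞) * A.toFun τ
        ≤ (ε : ℝ≥0∞) + F.toFun s := add_le_add h2 h1
      _ = F.toFun s + ε := add_comm _ _
      _ ≤ F.toFun s + A.toFun t + ε := by gcongr; exact le_self_add

end
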